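/- Let s ≥ 1 and m_1, …, m_s ≥ 1, let G be the disjoint union G_{m_1} ⊔ ⋯ ⊔ G_{m_s}, and let n = m_1 + ⋯ + m_s. Then every complex root of the h-polynomial Σ_{k=0}^{n} h_k t^k of the independence complex of G is a negative real number, where the h-vector (h_0,…,h_n) is defined by Σ_{k=0}^{n} h_k t^{n−k} = Σ_{i=0}^{n} f_{i−1}(Ind(G))·(t−1)^{n−i} and f_i(Ind(G)) is the number of independent sets of G of cardinality i+1 (with f_{−1} = 1). -/

import Mathlib

/-- The vertex set of the graph `Gₘ`: `Sum.inl i` is the vertex `a_{i+1}` (for `0 ≤ i < m`),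
`Sum.inr (Sum.inl i)` is `b_{i+1}`, and `Sum.inr (Sum.inr j)` is `c_{j+2}`. -/
abbrev GV (m : ℕ) := Fin m ⊕ Fin m ⊕ Fin (m - 1)

/-- The vertex `a_{i+1}` of `Gₘ`. -/
def aV {m : ℕ} (i : Fin m) : GV m := Sum.inl i
/-- The vertex `b_{i+1}` of `Gₘ`. -/
def bV {m : ℕ} (i : Fin m) : GV m := Sum.inr (Sum.inl i)
/-- The vertex `c_{j+2}` of `Gₘ`. -/
def cV {m : ℕ} (j : Fin (m - 1)) : GV m := Sum.inr (Sum.inr j)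

/-- Half of the adjacency relation of `Gₘ` (the full relation is its symmetrization):
the edges `a_i a_{i+1}`, `a_i b_i`, `b_i c_{i+1}`, `b_i c_i`, `c_i a_{i+1}` (1-based indices). -/
def adjHalf (m : ℕ) : GV m → GV m → Bool
  | Sum.inl i, Sum.inl j => decide (i.val + 1 = j.val)
  | Sum.inl i, Sum.inr (Sum.inl j) => decide (i = j)
  | Sum.inl _, Sum.inr (Sum.inr _) => false
  | Sum.inr (Sum.inl _), Sum.inl _ => false
  | Sum.inr (Sum.inl _), Sum.inr (Sum.inl _) => false
  | Sum.inr (Sum.inl i), Sum.inr (Sum.inr j) => decide (i.val = j.val ∨ i.val = j.val + 1)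
  | Sum.inr (Sum.inr j), Sum.inl i => decide (i.val = j.val + 2)
  | Sum.inr (Sum.inr _), Sum.inr (Sum.inl _) => false
  | Sum.inr (Sum.inr _), Sum.inr (Sum.inr _) => false

/-- The graph `Gₘ` from the paper (with `3m - 1` vertices). -/
def Gm (m : ℕ) : SimpleGraph (GV m) where
  Adj u v := adjHalf m u v = true ∨ adjHalf m v u = true
  symm := ⟨fun _ _ h => h.symm⟩
  loopless := by
    constructor
    rintro (i | i | j) h <;> simp [adjHalf] at h

instance (m : ℕ) : DecidableRel (Gm m).Adj := fun u v =>
  inferInstanceAs (Decidable (adjHalf m u v = true ∨ adjHalf m v u = true))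

/-- The disjoint union `G_{m₁} ⊔ ⋯ ⊔ G_{mₛ}` (indexed disjoint union of the graphs
`Gm (mv i)` for `i : Fin s`). -/
def sigmaGm (s : ℕ) (mv : Fin s → ℕ) : SimpleGraph (Σ i : Fin s, GV (mv i)) where
  Adj u v := ∃ h : u.1 = v.1,
    (Gm (mv v.1)).Adj (cast (congrArg (fun t => GV (mv t)) h) u.2) v.2
  symm := by
    constructor
    rintro ⟨i, x⟩ ⟨j, y⟩ ⟨h, hadj⟩
    cases h
    exact ⟨rfl, hadj.symm⟩
  loopless := by
    constructor
    rintro ⟨i, x⟩ ⟨h, hadj⟩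
    exact (Gm (mv i)).loopless.irrefl x hadj

/-- The number of independent sets of cardinality `k` of a graph `G`. -/
noncomputable def nIndep {V : Type*} (G : SimpleGraph V) (k : ℕ) : ℕ :=
  Nat.card {A : Finset V // A.card = k ∧ ∀ u ∈ A, ∀ v ∈ A, ¬ G.Adj u v}

-- adjacency characterizations
lemma gm_adj_aa {m : ℕ} (i j : Fin m) :
    (Gm m).Adj (Sum.inl i) (Sum.inl j) ↔ (i.val + 1 = j.val ∨ j.val + 1 = i.val) := by
  simp [Gm, adjHalf]

lemma gm_adj_ab {m : ℕ} (i j : Fin m) :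
    (Gm m).Adj (Sum.inl i) (Sum.inr (Sum.inl j)) ↔ i = j := by
  simp [Gm, adjHalf]

lemma gm_adj_ac {m : ℕ} (i : Fin m) (j : Fin (m-1)) :
    (Gm m).Adj (Sum.inl i) (Sum.inr (Sum.inr j)) ↔ i.val = j.val + 2 := by
  simp [Gm, adjHalf]

lemma gm_adj_bb {m : ℕ} (i j : Fin m) :
    ¬ (Gm m).Adj (Sum.inr (Sum.inl i)) (Sum.inr (Sum.inl j)) := by
  simp [Gm, adjHalf]

lemma gm_adj_bc {m : ℕ} (i : Fin m) (j : Fin (m-1)) :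
    (Gm m).Adj (Sum.inr (Sum.inl i)) (Sum.inr (Sum.inr j)) ↔
      (i.val = j.val ∨ i.val = j.val + 1) := by
  simp [Gm, adjHalf]

lemma gm_adj_cc {m : ℕ} (i j : Fin (m-1)) :
    ¬ (Gm m).Adj (Sum.inr (Sum.inr i)) (Sum.inr (Sum.inr j)) := by
  simp [Gm, adjHalf]

section Aux
open Polynomial Finset

variable {V : Type*} [Fintype V] [DecidableEq V]

/-- independence predicate -/
def isInd (G : SimpleGraph V) (A : Finset V) : Prop := ∀ u ∈ A, ∀ v ∈ A, ¬ G.Adj u v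

/-- the finset of independent sets -/
def iSets (G : SimpleGraph V) [DecidableRel G.Adj] : Finset (Finset V) :=
  Finset.univ.filter (fun A => ∀ u ∈ A, ∀ v ∈ A, ¬ G.Adj u v)

lemma mem_iSets {G : SimpleGraph V} [DecidableRel G.Adj] {A : Finset V} :
    A ∈ iSets G ↔ isInd G A := by
  simp [iSets, isInd]

/-- the independence polynomial -/
noncomputable def iPoly (G : SimpleGraph V) [DecidableRel G.Adj] : Polynomial ℤ :=
  ∑ A ∈ iSets G, X ^ A.card

lemma iPoly_coeff (G : SimpleGraph V) [DecidableRel G.Adj] (k : ℕ) :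
    (iPoly G).coeff k = ((iSets G).filter (fun A => A.card = k)).card := by
  classical
  rw [iPoly, finset_sum_coeff]
  rw [Finset.card_filter]
  simp only [coeff_X_pow]
  push_cast
  exact Finset.sum_congr rfl (fun A _ => by by_cases h : A.card = k <;> simp [h]; exact fun hh => h hh.symm)

lemma nIndep_eq_coeff (G : SimpleGraph V) [DecidableRel G.Adj] (k : ℕ) :
    (nIndep G k : ℤ) = (iPoly G).coeff k := by
  classical
  rw [iPoly_coeff, nIndep, Nat.card_eq_fintype_card, Fintype.card_subtype]
  congr 2
  rw [iSets, Finset.filter_filter]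
  apply Finset.filter_congr
  intro A _
  simp [isInd, and_comm]


/-- Any independent set of `Gm m` has at most `m` elements. -/
lemma card_le_of_ind_Gm {m : ℕ} {A : Finset (GV m)} (hA : isInd (Gm m) A) :
    A.card ≤ m := by
  classical
  have h := Finset.card_le_card_of_injOn
    (f := fun x : GV m => match x with
      | Sum.inl i => (⟨i.val, i.isLt⟩ : Fin m)
      | Sum.inr (Sum.inl i) => ⟨i.val, i.isLt⟩
      | Sum.inr (Sum.inr j) =>
          if Sum.inl (⟨j.val + 1, by omega⟩ : Fin m) ∈ A then ⟨j.val, by omega⟩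
          else ⟨j.val + 1, by omega⟩)
    (s := A) (t := (Finset.univ : Finset (Fin m)))
    (fun _ _ => Finset.mem_univ _) ?_
  · simpa using h
  · rintro (i | i | j) hx (i' | i' | j') hy hf <;> simp only [] at hf
    · -- a a
      have : i = i' := by
        apply Fin.ext; have := congrArg Fin.val hf; simpa using this
      rw [this]
    · -- a b
      exfalso
      have : i = i' := by apply Fin.ext; have := congrArg Fin.val hf; simpa using this
      exact hA _ hx _ hy ((gm_adj_ab i i').2 this)
    · -- a c
      exfalso
      by_cases hc : Sum.inl (⟨j'.val + 1, by omega⟩ : Fin m) ∈ A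
      · rw [if_pos hc] at hf
        have hv : i.val = j'.val := by have := congrArg Fin.val hf; simpa using this
        exact hA _ hx _ hc ((gm_adj_aa i _).2 (Or.inl (by simp [hv])))
      · rw [if_neg hc] at hf
        have hv : i.val = j'.val + 1 := by have := congrArg Fin.val hf; simpa using this
        have he : (Sum.inl (⟨j'.val + 1, by omega⟩ : Fin m) : GV m) = Sum.inl i := by
          rw [Sum.inl.injEq]; apply Fin.ext; simp [hv]
        exact hc (he ▸ hx)
    · -- b a
      exfalso
      have : i = i' := by apply Fin.ext; have := congrArg Fin.val hf; simpa using this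
      exact hA _ hy _ hx ((gm_adj_ab i' i).2 (by rw [this]))
    · -- b b
      have : i = i' := by apply Fin.ext; have := congrArg Fin.val hf; simpa using this
      rw [this]
    · -- b c
      exfalso
      by_cases hc : Sum.inl (⟨j'.val + 1, by omega⟩ : Fin m) ∈ A
      · rw [if_pos hc] at hf
        have hv : i.val = j'.val := by have := congrArg Fin.val hf; simpa using this
        exact hA _ hx _ hy ((gm_adj_bc i j').2 (Or.inl hv))
      · rw [if_neg hc] at hf
        have hv : i.val = j'.val + 1 := by have := congrArg Fin.val hf; simpa using this
        exact hA _ hx _ hy ((gm_adj_bc i j').2 (Or.inr hv))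
    · -- c a
      exfalso
      by_cases hc : Sum.inl (⟨j.val + 1, by omega⟩ : Fin m) ∈ A
      · rw [if_pos hc] at hf
        have hv : j.val = i'.val := by have := congrArg Fin.val hf; simpa using this
        exact hA _ hc _ hy ((gm_adj_aa _ i').2 (Or.inr (by simp [hv])))
      · rw [if_neg hc] at hf
        have hv : j.val + 1 = i'.val := by have := congrArg Fin.val hf; simpa using this
        have he : (Sum.inl (⟨j.val + 1, by omega⟩ : Fin m) : GV m) = Sum.inl i' := by
          rw [Sum.inl.injEq]; apply Fin.ext; simp [hv]
        exact hc (he ▸ hy)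
    · -- c b
      exfalso
      by_cases hc : Sum.inl (⟨j.val + 1, by omega⟩ : Fin m) ∈ A
      · rw [if_pos hc] at hf
        have hv : j.val = i'.val := by have := congrArg Fin.val hf; simpa using this
        exact hA _ hy _ hx ((gm_adj_bc i' j).2 (Or.inl hv.symm))
      · rw [if_neg hc] at hf
        have hv : j.val + 1 = i'.val := by have := congrArg Fin.val hf; simpa using this
        exact hA _ hy _ hx ((gm_adj_bc i' j).2 (Or.inr hv.symm))
    · -- c c
      by_cases hc : Sum.inl (⟨j.val + 1, by omega⟩ : Fin m) ∈ A <;>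
        by_cases hc' : Sum.inl (⟨j'.val + 1, by omega⟩ : Fin m) ∈ A
      · rw [if_pos hc, if_pos hc'] at hf
        have : j = j' := by apply Fin.ext; have := congrArg Fin.val hf; simpa using this
        rw [this]
      · exfalso
        rw [if_pos hc, if_neg hc'] at hf
        have hv : j.val = j'.val + 1 := by have := congrArg Fin.val hf; simpa using this
        exact hA _ hc _ hy ((gm_adj_ac _ j').2 (by simp; omega))
      · exfalso
        rw [if_neg hc, if_pos hc'] at hf
        have hv : j.val + 1 = j'.val := by have := congrArg Fin.val hf; simpa using this
        exact hA _ hc' _ hx ((gm_adj_ac _ j).2 (by simp; omega))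
      · rw [if_neg hc, if_neg hc'] at hf
        have : j = j' := by apply Fin.ext; have := congrArg Fin.val hf; simpa using this
        rw [this]
open Polynomial in
/-- weighted sum over independent sets satisfying a predicate -/
noncomputable def wA {V : Type*} [Fintype V] [DecidableEq V] (G : SimpleGraph V)
    [DecidableRel G.Adj] (cls : Finset V → Prop) [DecidablePred cls] : Polynomial ℤ :=
  ∑ A ∈ (iSets G).filter cls, X ^ A.card

open Polynomial in
lemma iPoly_eq_wA {V : Type*} [Fintype V] [DecidableEq V] (G : SimpleGraph V)
    [DecidableRel G.Adj] : iPoly G = wA G (fun _ => True) := by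
  rw [iPoly, wA]; congr 1; simp

open Polynomial Finset in
/-- The engine lemma: a class of independent sets of `G` forced to contain `s₀` and otherwise
located inside the image of an induced embedding `e` contributes `X^|s₀| * (restricted
independence polynomial of H)`. -/
lemma engine {V W : Type*} [Fintype V] [Fintype W] [DecidableEq V] [DecidableEq W]
    (G : SimpleGraph W) (H : SimpleGraph V) [DecidableRel G.Adj] [DecidableRel H.Adj]
    (e : V → W) (hinj : Function.Injective e)
    (hadj : ∀ u v, H.Adj u v ↔ G.Adj (e u) (e v))
    (s₀ : Finset W) (hs₀ : isInd G s₀)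
    (P : V → Prop) [DecidablePred P]
    (hPs : ∀ v, P v → e v ∉ s₀)
    (hPadj : ∀ v, P v → ∀ x ∈ s₀, ¬ G.Adj (e v) x)
    (cls : Finset W → Prop) [DecidablePred cls]
    (hcls : ∀ A, isInd G A →
      (cls A ↔ (s₀ ⊆ A ∧ ∀ w ∈ A, w ∉ s₀ → ∃ v, P v ∧ e v = w))) :
    wA G cls = X ^ s₀.card * wA H (fun B => ∀ v ∈ B, P v) := by
  classical
  rw [wA, wA, Finset.mul_sum]
  apply Finset.sum_nbij' (i := fun A => Finset.univ.filter (fun v => e v ∈ A ∧ e v ∉ s₀))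
    (j := fun B => s₀ ∪ B.image e)
  · -- hi : maps into target
    intro A hA
    rw [Finset.mem_filter] at hA ⊢
    obtain ⟨hA1, hA2⟩ := hA
    rw [mem_iSets] at hA1
    have hch := (hcls A hA1).1 hA2
    constructor
    · rw [mem_iSets]
      intro u hu v hv
      rw [Finset.mem_filter] at hu hv
      rw [hadj]
      exact hA1 _ hu.2.1 _ hv.2.1
    · intro v hv
      rw [Finset.mem_filter] at hv
      obtain ⟨v', hv', hev⟩ := hch.2 _ hv.2.1 hv.2.2
      rwa [← hinj hev]
  · -- hj
    intro B hB
    rw [Finset.mem_filter] at hB ⊢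
    obtain ⟨hB1, hB2⟩ := hB
    rw [mem_iSets] at hB1
    have hind : isInd G (s₀ ∪ B.image e) := by
      intro u hu v hv
      rw [Finset.mem_union] at hu hv
      rcases hu with hu | hu <;> rcases hv with hv | hv
      · exact hs₀ _ hu _ hv
      · rw [Finset.mem_image] at hv
        obtain ⟨v', hv', rfl⟩ := hv
        intro hadj'
        exact hPadj v' (hB2 v' hv') u hu hadj'.symm
      · rw [Finset.mem_image] at hu
        obtain ⟨u', hu', rfl⟩ := hu
        exact hPadj u' (hB2 u' hu') v hv
      · rw [Finset.mem_image] at hu hv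
        obtain ⟨u', hu', rfl⟩ := hu
        obtain ⟨v', hv', rfl⟩ := hv
        rw [← hadj]
        exact hB1 _ hu' _ hv'
    constructor
    · rwa [mem_iSets]
    · rw [hcls _ hind]
      refine ⟨Finset.subset_union_left, ?_⟩
      intro w hw hws
      rw [Finset.mem_union] at hw
      rcases hw with hw | hw
      · exact absurd hw hws
      · rw [Finset.mem_image] at hw
        obtain ⟨v', hv', rfl⟩ := hw
        exact ⟨v', hB2 v' hv', rfl⟩
  · -- left inverse
    intro A hA
    rw [Finset.mem_filter] at hA
    obtain ⟨hA1, hA2⟩ := hA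
    rw [mem_iSets] at hA1
    have hch := (hcls A hA1).1 hA2
    ext w
    rw [Finset.mem_union, Finset.mem_image]
    constructor
    · rintro (hw | ⟨v, hv, rfl⟩)
      · exact hch.1 hw
      · rw [Finset.mem_filter] at hv
        exact hv.2.1
    · intro hw
      by_cases hws : w ∈ s₀
      · exact Or.inl hws
      · obtain ⟨v, hv, rfl⟩ := hch.2 _ hw hws
        exact Or.inr ⟨v, by rw [Finset.mem_filter]; exact ⟨Finset.mem_univ _, hw, hws⟩, rfl⟩
  · -- right inverse
    intro B hB
    rw [Finset.mem_filter] at hB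
    obtain ⟨_, hB2⟩ := hB
    ext v
    rw [Finset.mem_filter, Finset.mem_union, Finset.mem_image]
    constructor
    · rintro ⟨-, (h | ⟨v', hv', hev⟩), hns⟩
      · exact absurd h hns
      · rwa [← hinj hev]
    · intro hv
      exact ⟨Finset.mem_univ _, Or.inr ⟨v, hv, rfl⟩, hPs v (hB2 v hv)⟩
  · -- sums agree
    intro A hA
    rw [Finset.mem_filter] at hA
    obtain ⟨hA1, hA2⟩ := hA
    rw [mem_iSets] at hA1
    have hch := (hcls A hA1).1 hA2
    have himg : (Finset.univ.filter (fun v => e v ∈ A ∧ e v ∉ s₀)).image e = A \ s₀ := by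
      ext w
      rw [Finset.mem_image, Finset.mem_sdiff]
      constructor
      · rintro ⟨v, hv, rfl⟩
        rw [Finset.mem_filter] at hv
        exact ⟨hv.2.1, hv.2.2⟩
      · rintro ⟨hw, hws⟩
        obtain ⟨v, hv, rfl⟩ := hch.2 _ hw hws
        exact ⟨v, by rw [Finset.mem_filter]; exact ⟨Finset.mem_univ _, hw, hws⟩, rfl⟩
    have hcard : (Finset.univ.filter (fun v => e v ∈ A ∧ e v ∉ s₀)).card = (A \ s₀).card := by
      rw [← himg, Finset.card_image_of_injOn (fun x _ y _ h => hinj h)]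
    rw [hcard, ← pow_add, Finset.card_sdiff_of_subset hch.1]
    congr 1
    have := Finset.card_le_card hch.1
    omega
/-- The canonical embedding `GV m → GV (m+1)`. -/
def embGV {m : ℕ} : GV m → GV (m+1)
  | Sum.inl i => Sum.inl (Fin.castLE (by omega) i)
  | Sum.inr (Sum.inl i) => Sum.inr (Sum.inl (Fin.castLE (by omega) i))
  | Sum.inr (Sum.inr j) => Sum.inr (Sum.inr (Fin.castLE (by omega) j))

lemma embGV_inj {m : ℕ} : Function.Injective (embGV (m := m)) := by
  rintro (i | i | j) (i' | i' | j') h <;>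
    simp only [embGV] at h <;>
    simp only [Sum.inl.injEq, Sum.inr.injEq, reduceCtorEq] at h <;>
    simp_all [Fin.ext_iff]

lemma embGV_adj {m : ℕ} (u v : GV m) :
    (Gm m).Adj u v ↔ (Gm (m+1)).Adj (embGV u) (embGV v) := by
  rcases u with i | i | j <;> rcases v with i' | i' | j' <;>
    simp [embGV, gm_adj_aa, gm_adj_ab, gm_adj_ac, gm_adj_bb, gm_adj_bc, gm_adj_cc,
      Fin.ext_iff, Gm, adjHalf]

/-- allowed vertices when `a_{m+2} ∈ S` (class A): exclude `a_{m+1}` and `c_{m+1}`. -/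
def PrA (m : ℕ) : GV (m+1) → Prop
  | Sum.inl i => i.val < m
  | Sum.inr (Sum.inl _) => True
  | Sum.inr (Sum.inr j) => j.val + 1 < m

/-- allowed vertices when `c_{m+2} ∈ S` (class B): exclude `b_{m+1}`. -/
def PrB (m : ℕ) : GV (m+1) → Prop
  | Sum.inl _ => True
  | Sum.inr (Sum.inl i) => i.val < m
  | Sum.inr (Sum.inr _) => True

instance (m : ℕ) : DecidablePred (PrA m) := fun v => by
  rcases v with i | i | j <;> simp only [PrA] <;> infer_instance

instance (m : ℕ) : DecidablePred (PrB m) := fun v => by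
  rcases v with i | i | j <;> simp only [PrB] <;> infer_instance
open Polynomial in
lemma wA_congr {V : Type*} [Fintype V] [DecidableEq V] (G : SimpleGraph V) [DecidableRel G.Adj]
    (cls cls' : Finset V → Prop) [DecidablePred cls] [DecidablePred cls']
    (h : ∀ A, isInd G A → (cls A ↔ cls' A)) : wA G cls = wA G cls' := by
  rw [wA, wA]
  exact Finset.sum_congr (Finset.filter_congr (fun A hA => h A (mem_iSets.1 hA))) (fun _ _ => rfl)

open Polynomial in
lemma wA_split {V : Type*} [Fintype V] [DecidableEq V] (G : SimpleGraph V) [DecidableRel G.Adj]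
    (cls p : Finset V → Prop) [DecidablePred cls] [DecidablePred p] :
    wA G cls = wA G (fun A => cls A ∧ p A) + wA G (fun A => cls A ∧ ¬ p A) := by
  rw [wA, wA, wA, ← Finset.sum_filter_add_sum_filter_not ((iSets G).filter cls) p]
  congr 1 <;> rw [Finset.filter_filter]

def aLv (m : ℕ) : GV (m+2) := Sum.inl ⟨m+1, by omega⟩
def bLv (m : ℕ) : GV (m+2) := Sum.inr (Sum.inl ⟨m+1, by omega⟩)
def cLv (m : ℕ) : GV (m+2) := Sum.inr (Sum.inr ⟨m, by omega⟩)

lemma embGV_ne_aL {m : ℕ} (v : GV (m+1)) : embGV v ≠ aLv m := by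
  rcases v with i | i | j <;> simp [embGV, aLv, Fin.ext_iff] <;> omega

lemma embGV_ne_bL {m : ℕ} (v : GV (m+1)) : embGV v ≠ bLv m := by
  rcases v with i | i | j <;> simp [embGV, bLv, Fin.ext_iff] <;> omega

lemma embGV_ne_cL {m : ℕ} (v : GV (m+1)) : embGV v ≠ cLv m := by
  rcases v with i | i | j <;> simp [embGV, cLv, Fin.ext_iff] <;> omega

open Polynomial in
lemma classC1 (m : ℕ) :
    wA (Gm (m+2)) (fun A => (aLv m ∉ A ∧ cLv m ∉ A) ∧ bLv m ∉ A) = iPoly (Gm (m+1)) := by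
  classical
  rw [engine (Gm (m+2)) (Gm (m+1)) embGV embGV_inj embGV_adj ∅
    (by intro u hu; simp at hu) (fun _ => True) (fun v _ => by simp)
    (fun v _ x hx => by simp at hx) _ ?_]
  · simp only [Finset.card_empty, pow_zero, one_mul]
    rw [iPoly_eq_wA]
    exact wA_congr _ _ _ (fun A _ => by simp)
  · intro A hind
    constructor
    · rintro ⟨⟨haL, hcL⟩, hbL⟩
      refine ⟨Finset.empty_subset _, ?_⟩
      intro w hw _
      rcases w with i | i | j
      · have h1 : i.val ≠ m + 1 := by
          intro h
          exact haL (by rwa [show (Sum.inl i : GV (m+2)) = aLv m by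
            simp [aLv, Fin.ext_iff, h]] at hw)
        exact ⟨Sum.inl ⟨i.val, by omega⟩, trivial, by simp [embGV, Fin.ext_iff]⟩
      · have h1 : i.val ≠ m + 1 := by
          intro h
          exact hbL (by rwa [show (Sum.inr (Sum.inl i) : GV (m+2)) = bLv m by
            simp [bLv, Fin.ext_iff, h]] at hw)
        exact ⟨Sum.inr (Sum.inl ⟨i.val, by omega⟩), trivial, by simp [embGV, Fin.ext_iff]⟩
      · have h1 : j.val ≠ m := by
          intro h
          exact hcL (by rwa [show (Sum.inr (Sum.inr j) : GV (m+2)) = cLv m by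
            simp [cLv, Fin.ext_iff, h]] at hw)
        exact ⟨Sum.inr (Sum.inr ⟨j.val, by omega⟩), trivial, by simp [embGV, Fin.ext_iff]⟩
    · rintro ⟨-, himg⟩
      refine ⟨⟨?_, ?_⟩, ?_⟩ <;> intro hmem
      · obtain ⟨v, -, hev⟩ := himg _ hmem (by simp)
        exact embGV_ne_aL v hev
      · obtain ⟨v, -, hev⟩ := himg _ hmem (by simp)
        exact embGV_ne_cL v hev
      · obtain ⟨v, -, hev⟩ := himg _ hmem (by simp)
        exact embGV_ne_bL v hev

open Polynomial in
lemma classC2 (m : ℕ) :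
    wA (Gm (m+2)) (fun A => (aLv m ∉ A ∧ cLv m ∉ A) ∧ bLv m ∈ A)
      = X * iPoly (Gm (m+1)) := by
  classical
  rw [engine (Gm (m+2)) (Gm (m+1)) embGV embGV_inj embGV_adj {bLv m}
    (by intro u hu v hv; simp at hu hv; subst hu; subst hv; exact (Gm _).loopless.irrefl _)
    (fun _ => True) (fun v _ => by simpa using embGV_ne_bL v) ?_ _ ?_]
  · simp only [Finset.card_singleton, pow_one]
    congr 1
    rw [iPoly_eq_wA]
    exact wA_congr _ _ _ (fun A _ => by simp)
  · -- hPadj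
    intro v _ x hx
    rw [Finset.mem_singleton] at hx
    subst hx
    rcases v with i | i | j
    · intro hadj
      have := (gm_adj_ab _ _).1 hadj
      have := congrArg Fin.val this
      simp [embGV, bLv] at this
      omega
    · exact gm_adj_bb _ _
    · intro hadj
      have := (gm_adj_bc _ _).1 hadj.symm
      simp [embGV, bLv] at this
      omega
  · intro A hind
    constructor
    · rintro ⟨⟨haL, hcL⟩, hbL⟩
      refine ⟨Finset.singleton_subset_iff.2 hbL, ?_⟩
      intro w hw hws
      rw [Finset.mem_singleton] at hws
      rcases w with i | i | j
      · have h1 : i.val ≠ m + 1 := by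
          intro h
          exact haL (by rwa [show (Sum.inl i : GV (m+2)) = aLv m by
            simp [aLv, Fin.ext_iff, h]] at hw)
        exact ⟨Sum.inl ⟨i.val, by omega⟩, trivial, by simp [embGV, Fin.ext_iff]⟩
      · have h1 : i.val ≠ m + 1 := by
          intro h
          exact hws (by simp [bLv, Fin.ext_iff, h])
        exact ⟨Sum.inr (Sum.inl ⟨i.val, by omega⟩), trivial, by simp [embGV, Fin.ext_iff]⟩
      · have h1 : j.val ≠ m := by
          intro h
          exact hcL (by rwa [show (Sum.inr (Sum.inr j) : GV (m+2)) = cLv m by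
            simp [cLv, Fin.ext_iff, h]] at hw)
        exact ⟨Sum.inr (Sum.inr ⟨j.val, by omega⟩), trivial, by simp [embGV, Fin.ext_iff]⟩
    · rintro ⟨hsub, himg⟩
      refine ⟨⟨?_, ?_⟩, hsub (Finset.mem_singleton_self _)⟩ <;> intro hmem
      · obtain ⟨v, -, hev⟩ := himg _ hmem (by simp [aLv, bLv])
        exact embGV_ne_aL v hev
      · obtain ⟨v, -, hev⟩ := himg _ hmem (by simp [cLv, bLv])
        exact embGV_ne_cL v hev
open Polynomial in
lemma classC3 (m : ℕ) :
    wA (Gm (m+2)) (fun A => aLv m ∈ A ∧ cLv m ∉ A)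
      = X * wA (Gm (m+1)) (fun B => ∀ v ∈ B, PrA m v) := by
  classical
  rw [engine (Gm (m+2)) (Gm (m+1)) embGV embGV_inj embGV_adj {aLv m}
    (by intro u hu v hv; simp at hu hv; subst hu; subst hv; exact (Gm _).loopless.irrefl _)
    (PrA m) (fun v _ => by simpa using embGV_ne_aL v) ?_ _ ?_]
  · simp only [Finset.card_singleton, pow_one]
  · -- hPadj
    intro v hv x hx
    rw [Finset.mem_singleton] at hx
    subst hx
    rcases v with i | i | j
    · simp only [PrA] at hv
      intro hadj
      rcases (gm_adj_aa _ _).1 hadj with h | h <;> simp [embGV, aLv] at h <;> omega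
    · intro hadj
      have := (gm_adj_ab _ _).1 hadj.symm
      have := congrArg Fin.val this
      simp [embGV, aLv] at this
      omega
    · simp only [PrA] at hv
      intro hadj
      have := (gm_adj_ac _ _).1 hadj.symm
      simp [embGV, aLv] at this
      omega
  · intro A hind
    constructor
    · rintro ⟨haL, hcL⟩
      refine ⟨Finset.singleton_subset_iff.2 haL, ?_⟩
      intro w hw hws
      rw [Finset.mem_singleton] at hws
      have hnadj : ¬ (Gm (m+2)).Adj w (aLv m) := hind _ hw _ haL
      rcases w with i | i | j
      · have h1 : i.val ≠ m + 1 := by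
          intro h; exact hws (by simp [aLv, Fin.ext_iff, h])
        have h2 : i.val ≠ m := by
          intro h
          exact hnadj ((gm_adj_aa i _).2 (Or.inl (by simp [aLv, h])))
        refine ⟨Sum.inl ⟨i.val, by omega⟩, ?_, by simp [embGV, Fin.ext_iff]⟩
        simp only [PrA]; omega
      · have h1 : i.val ≠ m + 1 := by
          intro h
          exact hnadj (((gm_adj_ab _ i).2 (by simp [aLv, Fin.ext_iff, h])).symm)
        exact ⟨Sum.inr (Sum.inl ⟨i.val, by omega⟩), trivial, by simp [embGV, Fin.ext_iff]⟩
      · have h1 : j.val ≠ m := by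
          intro h
          exact hcL (by rwa [show (Sum.inr (Sum.inr j) : GV (m+2)) = cLv m by
            simp [cLv, Fin.ext_iff, h]] at hw)
        have h2 : j.val + 1 ≠ m := by
          intro h
          exact hnadj (((gm_adj_ac _ j).2 (by simp [aLv]; omega)).symm)
        refine ⟨Sum.inr (Sum.inr ⟨j.val, by omega⟩), ?_, by simp [embGV, Fin.ext_iff]⟩
        simp only [PrA]; omega
    · rintro ⟨hsub, himg⟩
      refine ⟨hsub (Finset.mem_singleton_self _), fun hcL => ?_⟩
      obtain ⟨v, hPv, hev⟩ := himg _ hcL (by simp [cLv, aLv])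
      rcases v with i | i | j <;> simp [embGV, cLv, Fin.ext_iff] at hev
      simp only [PrA] at hPv
      omega

open Polynomial in
lemma classC4 (m : ℕ) :
    wA (Gm (m+2)) (fun A => aLv m ∉ A ∧ cLv m ∈ A)
      = X * wA (Gm (m+1)) (fun B => ∀ v ∈ B, PrB m v) := by
  classical
  rw [engine (Gm (m+2)) (Gm (m+1)) embGV embGV_inj embGV_adj {cLv m}
    (by intro u hu v hv; simp at hu hv; subst hu; subst hv; exact (Gm _).loopless.irrefl _)
    (PrB m) (fun v _ => by simpa using embGV_ne_cL v) ?_ _ ?_]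
  · simp only [Finset.card_singleton, pow_one]
  · -- hPadj
    intro v hv x hx
    rw [Finset.mem_singleton] at hx
    subst hx
    rcases v with i | i | j
    · intro hadj
      have := (gm_adj_ac _ _).1 hadj
      simp [embGV, cLv] at this
      omega
    · simp only [PrB] at hv
      intro hadj
      have := (gm_adj_bc _ _).1 hadj
      simp [embGV, cLv] at this
      omega
    · exact gm_adj_cc _ _
  · intro A hind
    constructor
    · rintro ⟨haL, hcL⟩
      refine ⟨Finset.singleton_subset_iff.2 hcL, ?_⟩
      intro w hw hws
      rw [Finset.mem_singleton] at hws
      have hnadj : ¬ (Gm (m+2)).Adj w (cLv m) := hind _ hw _ hcL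
      rcases w with i | i | j
      · have h1 : i.val ≠ m + 1 := by
          intro h
          exact haL (by rwa [show (Sum.inl i : GV (m+2)) = aLv m by
            simp [aLv, Fin.ext_iff, h]] at hw)
        exact ⟨Sum.inl ⟨i.val, by omega⟩, trivial, by simp [embGV, Fin.ext_iff]⟩
      · have h1 : i.val < m := by
          have h2 : ¬ (i.val = m ∨ i.val = m + 1) := by
            intro h
            exact hnadj ((gm_adj_bc i _).2 (by simpa [cLv] using h))
          omega
        refine ⟨Sum.inr (Sum.inl ⟨i.val, by omega⟩), ?_, by simp [embGV, Fin.ext_iff]⟩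
        simp only [PrB]; omega
      · have h1 : j.val ≠ m := by
          intro h; exact hws (by simp [cLv, Fin.ext_iff, h])
        exact ⟨Sum.inr (Sum.inr ⟨j.val, by omega⟩), trivial, by simp [embGV, Fin.ext_iff]⟩
    · rintro ⟨hsub, himg⟩
      refine ⟨fun haL => ?_, hsub (Finset.mem_singleton_self _)⟩
      obtain ⟨v, hPv, hev⟩ := himg _ haL (by simp [cLv, aLv])
      exact embGV_ne_aL v hev

open Polynomial in
lemma classC5 (m : ℕ) :
    wA (Gm (m+2)) (fun A => aLv m ∈ A ∧ cLv m ∈ A)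
      = X ^ 2 * iPoly (Gm m) := by
  classical
  have hac : ¬ (Gm (m+2)).Adj (aLv m) (cLv m) := by
    rw [aLv, cLv, gm_adj_ac]
    simp
  rw [engine (Gm (m+2)) (Gm m) (fun v => embGV (embGV v))
    (fun u v h => embGV_inj (embGV_inj h))
    (fun u v => (embGV_adj u v).trans (embGV_adj _ _)) {aLv m, cLv m}
    ?_ (fun _ => True) ?_ ?_ _ ?_]
  · have hcard : ({aLv m, cLv m} : Finset (GV (m+2))).card = 2 := by
      rw [Finset.card_insert_of_notMem (by simp [aLv, cLv]), Finset.card_singleton]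
    rw [hcard, iPoly_eq_wA]
    congr 1
    exact wA_congr _ _ _ (fun A _ => by simp)
  · -- s₀ independent
    intro u hu v hv
    simp only [Finset.mem_insert, Finset.mem_singleton] at hu hv
    rcases hu with rfl | rfl <;> rcases hv with rfl | rfl
    · exact (Gm _).loopless.irrefl _
    · exact hac
    · exact fun h => hac h.symm
    · exact (Gm _).loopless.irrefl _
  · -- hPs
    intro v _
    simp only [Finset.mem_insert, Finset.mem_singleton]
    push_neg
    exact ⟨embGV_ne_aL _, embGV_ne_cL _⟩
  · -- hPadj
    intro v _ x hx
    simp only [Finset.mem_insert, Finset.mem_singleton] at hx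
    rcases hx with rfl | rfl <;> rcases v with i | i | j
    · intro hadj
      rcases (gm_adj_aa _ _).1 hadj with h | h <;> simp [embGV, aLv] at h <;> omega
    · intro hadj
      have := congrArg Fin.val ((gm_adj_ab _ _).1 hadj.symm)
      simp [embGV, aLv] at this
      omega
    · intro hadj
      have := (gm_adj_ac _ _).1 hadj.symm
      simp [embGV, aLv] at this
      omega
    · intro hadj
      have := (gm_adj_ac _ _).1 hadj
      simp [embGV, cLv] at this
      omega
    · intro hadj
      have := (gm_adj_bc _ _).1 hadj
      simp [embGV, cLv] at this
      omega
    · exact gm_adj_cc _ _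
  · intro A hind
    constructor
    · rintro ⟨haL, hcL⟩
      refine ⟨?_, ?_⟩
      · intro x hx
        simp only [Finset.mem_insert, Finset.mem_singleton] at hx
        rcases hx with rfl | rfl
        · exact haL
        · exact hcL
      intro w hw hws
      simp only [Finset.mem_insert, Finset.mem_singleton] at hws
      push_neg at hws
      have hnadjA : ¬ (Gm (m+2)).Adj w (aLv m) := hind _ hw _ haL
      have hnadjC : ¬ (Gm (m+2)).Adj w (cLv m) := hind _ hw _ hcL
      rcases w with i | i | j
      · have h1 : i.val ≠ m + 1 := by
          intro h; exact hws.1 (by simp [aLv, Fin.ext_iff, h])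
        have h2 : i.val ≠ m := by
          intro h
          exact hnadjA ((gm_adj_aa i _).2 (Or.inl (by simp [aLv, h])))
        exact ⟨Sum.inl ⟨i.val, by omega⟩, trivial, by simp [embGV, Fin.ext_iff]⟩
      · have h1 : ¬ (i.val = m ∨ i.val = m + 1) := by
          intro h
          exact hnadjC ((gm_adj_bc i _).2 (by simpa [cLv] using h))
        exact ⟨Sum.inr (Sum.inl ⟨i.val, by omega⟩), trivial, by simp [embGV, Fin.ext_iff]⟩
      · have h1 : j.val ≠ m := by
          intro h; exact hws.2 (by simp [cLv, Fin.ext_iff, h])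
        have h2 : j.val + 1 ≠ m := by
          intro h
          exact hnadjA (((gm_adj_ac _ j).2 (by simp [aLv]; omega)).symm)
        exact ⟨Sum.inr (Sum.inr ⟨j.val, by omega⟩), trivial, by simp [embGV, Fin.ext_iff]⟩
    · rintro ⟨hsub, -⟩
      exact ⟨hsub (by simp), hsub (by simp)⟩
open Polynomial in
lemma wA_split_iff {V : Type*} [Fintype V] [DecidableEq V] (G : SimpleGraph V)
    [DecidableRel G.Adj] (cls p cls1 cls2 : Finset V → Prop)
    [DecidablePred cls] [DecidablePred p] [DecidablePred cls1] [DecidablePred cls2]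
    (h1 : ∀ A, isInd G A → (cls1 A ↔ (cls A ∧ p A)))
    (h2 : ∀ A, isInd G A → (cls2 A ↔ (cls A ∧ ¬ p A))) :
    wA G cls = wA G cls1 + wA G cls2 := by
  rw [wA_split G cls p]
  congr 1
  · exact (wA_congr _ _ _ h1).symm
  · exact (wA_congr _ _ _ h2).symm

lemma notSB_imp_SA (m : ℕ) (A : Finset (GV (m+1))) (hind : isInd (Gm (m+1)) A)
    (h : ¬ (∀ v ∈ A, PrB m v)) : ∀ v ∈ A, PrA m v := by
  push_neg at h
  obtain ⟨x, hx, hPx⟩ := h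
  rcases x with i | i | j
  · exact absurd trivial (by simpa [PrB] using hPx)
  · simp only [PrB] at hPx
    have him : i.val = m := by omega
    intro w hw
    rcases w with i' | i' | j'
    · simp only [PrA]
      by_contra hge
      have h1 : i' = i := by apply Fin.ext; omega
      exact hind _ hw _ hx ((gm_adj_ab i' i).2 h1)
    · simp only [PrA]
    · simp only [PrA]
      by_contra hge
      have h1 : i.val = j'.val + 1 := by omega
      exact hind _ hx _ hw ((gm_adj_bc i j').2 (Or.inr h1))
  · exact absurd trivial (by simpa [PrB] using hPx)

open Polynomial in
lemma wSA_SB_inter (m : ℕ) :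
    wA (Gm (m+1)) (fun B => (∀ v ∈ B, PrA m v) ∧ (∀ v ∈ B, PrB m v)) = iPoly (Gm m) := by
  classical
  rw [engine (Gm (m+1)) (Gm m) embGV embGV_inj embGV_adj ∅
    (by intro u hu; simp at hu) (fun _ => True) (fun v _ => by simp)
    (fun v _ x hx => by simp at hx) _ ?_]
  · simp only [Finset.card_empty, pow_zero, one_mul]
    rw [iPoly_eq_wA]
    exact wA_congr _ _ _ (fun A _ => by simp)
  · intro A hind
    constructor
    · rintro ⟨hSA, hSB⟩
      refine ⟨Finset.empty_subset _, ?_⟩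
      intro w hw _
      rcases w with i | i | j
      · have h1 := hSA _ hw
        simp only [PrA] at h1
        exact ⟨Sum.inl ⟨i.val, by omega⟩, trivial, by simp [embGV, Fin.ext_iff]⟩
      · have h1 := hSB _ hw
        simp only [PrB] at h1
        exact ⟨Sum.inr (Sum.inl ⟨i.val, by omega⟩), trivial, by simp [embGV, Fin.ext_iff]⟩
      · have h1 := hSA _ hw
        simp only [PrA] at h1
        exact ⟨Sum.inr (Sum.inr ⟨j.val, by omega⟩), trivial, by simp [embGV, Fin.ext_iff]⟩
    · rintro ⟨-, himg⟩
      constructor <;> intro w hw <;>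
        obtain ⟨v, -, hev⟩ := himg _ hw (by simp) <;>
        rcases v with i | i | j <;>
        rw [← hev] <;>
        simp [embGV, PrA, PrB] <;> omega

open Polynomial in
lemma wSA_add_wSB (m : ℕ) :
    wA (Gm (m+1)) (fun B => ∀ v ∈ B, PrA m v) + wA (Gm (m+1)) (fun B => ∀ v ∈ B, PrB m v)
      = iPoly (Gm (m+1)) + iPoly (Gm m) := by
  classical
  have hs1 : wA (Gm (m+1)) (fun B => ∀ v ∈ B, PrA m v)
      = wA (Gm (m+1)) (fun B => (∀ v ∈ B, PrA m v) ∧ (∀ v ∈ B, PrB m v))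
        + wA (Gm (m+1)) (fun B => ¬ (∀ v ∈ B, PrB m v)) :=
    wA_split_iff _ _ (fun B => ∀ v ∈ B, PrB m v) _ _
      (fun A _ => Iff.rfl)
      (fun A hA => ⟨fun h => ⟨notSB_imp_SA m A hA h, h⟩, fun h => h.2⟩)
  have hs2 : iPoly (Gm (m+1))
      = wA (Gm (m+1)) (fun B => ∀ v ∈ B, PrB m v)
        + wA (Gm (m+1)) (fun B => ¬ (∀ v ∈ B, PrB m v)) := by
    rw [iPoly_eq_wA]
    exact wA_split_iff _ _ (fun B => ∀ v ∈ B, PrB m v) _ _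
      (fun A _ => by tauto) (fun A _ => by tauto)
  rw [hs1, wSA_SB_inter]
  linear_combination -hs2

open Polynomial in
lemma iPoly_Gm_rec (m : ℕ) :
    iPoly (Gm (m+2)) = (1 + 2*X) * iPoly (Gm (m+1)) + (X + X^2) * iPoly (Gm m) := by
  classical
  have hA : iPoly (Gm (m+2)) = wA (Gm (m+2)) (fun A => aLv m ∈ A)
      + wA (Gm (m+2)) (fun A => aLv m ∉ A) := by
    rw [iPoly_eq_wA]
    exact wA_split_iff _ _ (fun A => aLv m ∈ A) _ _
      (fun A _ => by tauto) (fun A _ => by tauto)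
  have hB : wA (Gm (m+2)) (fun A => aLv m ∈ A)
      = wA (Gm (m+2)) (fun A => aLv m ∈ A ∧ cLv m ∈ A)
        + wA (Gm (m+2)) (fun A => aLv m ∈ A ∧ cLv m ∉ A) :=
    wA_split_iff _ _ (fun A => cLv m ∈ A) _ _
      (fun A _ => Iff.rfl) (fun A _ => Iff.rfl)
  have hC : wA (Gm (m+2)) (fun A => aLv m ∉ A)
      = wA (Gm (m+2)) (fun A => aLv m ∉ A ∧ cLv m ∈ A)
        + wA (Gm (m+2)) (fun A => aLv m ∉ A ∧ cLv m ∉ A) :=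
    wA_split_iff _ _ (fun A => cLv m ∈ A) _ _
      (fun A _ => Iff.rfl) (fun A _ => Iff.rfl)
  have hD : wA (Gm (m+2)) (fun A => aLv m ∉ A ∧ cLv m ∉ A)
      = wA (Gm (m+2)) (fun A => (aLv m ∉ A ∧ cLv m ∉ A) ∧ bLv m ∈ A)
        + wA (Gm (m+2)) (fun A => (aLv m ∉ A ∧ cLv m ∉ A) ∧ bLv m ∉ A) :=
    wA_split_iff _ _ (fun A => bLv m ∈ A) _ _
      (fun A _ => Iff.rfl) (fun A _ => Iff.rfl)
  have hJ := wSA_add_wSB m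
  rw [hA, hB, hC, hD, classC1, classC2, classC3, classC4, classC5]
  linear_combination X * hJ

noncomputable def Rpoly : ℕ → Polynomial ℤ
  | 0 => 1
  | 1 => 1 + 2*Polynomial.X
  | (m+2) => (1 + 2*Polynomial.X) * Rpoly (m+1) + (Polynomial.X + Polynomial.X^2) * Rpoly m
instance : IsEmpty (GV 0) :=
  inferInstanceAs (IsEmpty (Fin 0 ⊕ Fin 0 ⊕ Fin 0))

open Polynomial in
lemma iPoly_Gm_zero : iPoly (Gm 0) = 1 := by
  have hs : iSets (Gm 0) = {∅} := by
    ext A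
    simp only [mem_iSets, Finset.mem_singleton]
    constructor
    · intro _
      exact Finset.eq_empty_of_isEmpty A
    · rintro rfl
      intro u hu
      simp at hu
  rw [iPoly, hs, Finset.sum_singleton]
  simp

open Polynomial in
lemma iPoly_Gm_one : iPoly (Gm 1) = 1 + 2*X := by
  have hs : iSets (Gm 1) =
      {∅, {Sum.inl 0}, {Sum.inr (Sum.inl 0)}} := by decide
  rw [iPoly, hs]
  rw [Finset.sum_insert (by decide), Finset.sum_insert (by decide), Finset.sum_singleton]
  simp
  ring

open Polynomial in
lemma iPoly_Gm_eq_Rpoly : ∀ m, iPoly (Gm m) = Rpoly m := by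
  intro m
  induction m using Nat.twoStepInduction with
  | zero => exact iPoly_Gm_zero
  | one => exact iPoly_Gm_one
  | more n ih1 ih2 => rw [iPoly_Gm_rec, ih1, ih2]; rfl
section Sigma

variable {s : ℕ} {mv : Fin s → ℕ}

lemma sigmaGm_adj_mk {i : Fin s} {x y : GV (mv i)} :
    (sigmaGm s mv).Adj ⟨i, x⟩ ⟨i, y⟩ ↔ (Gm (mv i)).Adj x y := by
  constructor
  · rintro ⟨h, hadj⟩
    exact hadj
  · intro h
    exact ⟨rfl, h⟩

lemma sigmaGm_adj_ne {i j : Fin s} {x : GV (mv i)} {y : GV (mv j)} (hij : i ≠ j) :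
    ¬ (sigmaGm s mv).Adj ⟨i, x⟩ ⟨j, y⟩ := by
  rintro ⟨h, -⟩
  exact hij h

instance : DecidableRel (sigmaGm s mv).Adj := fun u v => by
  rcases u with ⟨i, x⟩
  rcases v with ⟨j, y⟩
  by_cases h : i = j
  · subst h
    exact decidable_of_iff _ sigmaGm_adj_mk.symm
  · exact isFalse (sigmaGm_adj_ne h)

open Polynomial in
lemma iPoly_sigmaGm : iPoly (sigmaGm s mv) = ∏ i, iPoly (Gm (mv i)) := by
  classical
  unfold iPoly
  rw [Finset.prod_univ_sum]
  apply Finset.sum_nbij'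
    (i := fun A => (fun i => Finset.univ.filter
        (fun x : GV (mv i) => (⟨i, x⟩ : Σ k, GV (mv k)) ∈ A)))
    (j := fun p => Finset.univ.sigma (fun i => p i))
  · -- maps into pi set
    intro A hA
    rw [mem_iSets] at hA
    rw [Fintype.mem_piFinset]
    intro i
    rw [mem_iSets]
    intro u hu v hv
    rw [Finset.mem_filter] at hu hv
    intro hadj
    exact hA _ hu.2 _ hv.2 (sigmaGm_adj_mk.2 hadj)
  · -- maps into iSets
    intro p hp
    rw [Fintype.mem_piFinset] at hp
    rw [mem_iSets]
    rintro ⟨i, x⟩ hu ⟨j, y⟩ hv hadj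
    rw [Finset.mem_sigma] at hu hv
    by_cases hij : i = j
    · subst hij
      have := mem_iSets.1 (hp i)
      exact this _ hu.2 _ hv.2 (sigmaGm_adj_mk.1 hadj)
    · exact sigmaGm_adj_ne hij hadj
  · -- left inverse
    intro A hA
    ext ⟨i, x⟩
    rw [Finset.mem_sigma, Finset.mem_filter]
    simp
  · -- right inverse
    intro p hp
    funext i
    ext x
    rw [Finset.mem_filter, Finset.mem_sigma]
    simp
  · -- sums agree
    intro A hA
    rw [Finset.prod_pow_eq_pow_sum]
    congr 1
    have hrepr : A = Finset.univ.sigma (fun i => Finset.univ.filter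
        (fun x : GV (mv i) => (⟨i, x⟩ : Σ k, GV (mv k)) ∈ A)) := by
      ext ⟨i, x⟩
      rw [Finset.mem_sigma]
      simp
    conv_lhs => rw [hrepr]
    rw [Finset.card_sigma]

open Polynomial in
lemma natDegree_iPoly_Gm (m : ℕ) : (iPoly (Gm m)).natDegree ≤ m := by
  rw [Polynomial.natDegree_le_iff_coeff_eq_zero]
  intro k hk
  rw [iPoly_coeff]
  norm_cast
  rw [Finset.card_eq_zero, Finset.filter_eq_empty_iff]
  intro A hA hcard
  have := card_le_of_ind_Gm (mem_iSets.1 hA)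
  omega

end Sigma
lemma quad_root_neg (sr : ℝ) (hs : 4 ≤ sr) (u : ℂ)
    (h : (sr : ℂ) * u^2 + (sr : ℂ) * u + 1 = 0) :
    ∃ r : ℝ, -1 < r ∧ r < 0 ∧ u = r := by
  have hs0 : (0:ℝ) < sr := by linarith
  set d : ℝ := Real.sqrt (sr^2 - 4*sr) with hd
  have hdnn : 0 ≤ d := Real.sqrt_nonneg _
  have hd2 : d^2 = sr^2 - 4*sr := Real.sq_sqrt (by nlinarith)
  have hdlt : d < sr := by nlinarith
  set r1 : ℝ := (-sr + d)/(2*sr) with hr1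
  set r2 : ℝ := (-sr - d)/(2*sr) with hr2
  have h1 : r1 + r2 = -1 := by
    rw [hr1, hr2, ← add_div, div_eq_iff (by positivity : (2*sr) ≠ 0)]
    ring
  have h2 : r1 * r2 = 1/sr := by
    rw [hr1, hr2, div_mul_div_comm,
      div_eq_div_iff (by positivity : (2*sr)*(2*sr) ≠ 0) (by positivity : sr ≠ 0)]
    linear_combination (-sr) * hd2
  have h1C : (r1 : ℂ) + (r2 : ℂ) = -1 := by exact_mod_cast congrArg (Complex.ofReal) h1
  have h2C : (r1 : ℂ) * (r2 : ℂ) = 1/(sr:ℂ) := by exact_mod_cast congrArg (Complex.ofReal) h2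
  have hsC : (sr : ℂ) ≠ 0 := by exact_mod_cast hs0.ne'
  have h2Cs : (sr:ℂ) * ((r1:ℂ) * (r2:ℂ)) = 1 := by
    rw [h2C]
    field_simp
  have key : (u - (r1:ℂ)) * (u - (r2:ℂ)) = 0 := by
    have keym : (sr:ℂ) * ((u - (r1:ℂ)) * (u - (r2:ℂ))) = 0 := by
      linear_combination h + (-(sr:ℂ)*u) * h1C + h2Cs
    rcases mul_eq_zero.1 keym with hm | hm
    · exact absurd hm hsC
    · exact hm
  rcases mul_eq_zero.1 key with hz | hz
  · refine ⟨r1, ?_, ?_, (sub_eq_zero.1 hz)⟩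
    · rw [hr1, lt_div_iff₀ (by linarith)]
      nlinarith
    · rw [hr1]
      apply div_neg_of_neg_of_pos <;> linarith
  · refine ⟨r2, ?_, ?_, (sub_eq_zero.1 hz)⟩
    · rw [hr2, lt_div_iff₀ (by linarith)]
      nlinarith
    · rw [hr2]
      apply div_neg_of_neg_of_pos <;> linarith

open Polynomial in
lemma Rpoly_root_neg (m : ℕ) (u : ℂ)
    (h : ((Rpoly m).map (Int.castRingHom ℂ)).eval u = 0) :
    ∃ r : ℝ, -1 < r ∧ r < 0 ∧ u = r := by
  classical
  set E : ℕ → ℂ := fun k => (((Rpoly k).map (Int.castRingHom ℂ)).eval u) with hE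
  have hE0 : E 0 = 1 := by simp [hE, Rpoly]
  have hE1 : E 1 = 1 + 2*u := by simp [hE, Rpoly]
  have hErec : ∀ k, E (k+2) = (1+2*u)*E (k+1) + (u + u^2)*E k := by
    intro k
    show (((Rpoly (k+2)).map (Int.castRingHom ℂ)).eval u) = _
    rw [show Rpoly (k+2) = (1 + 2*Polynomial.X) * Rpoly (k+1)
      + (Polynomial.X + Polynomial.X^2) * Rpoly k from rfl]
    simp [hE]
  have hzero : E m = 0 := h
  -- u ≠ 0
  have hu0 : u ≠ 0 := by
    rintro rfl
    have hone : ∀ k, E k = 1 := by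
      intro k
      induction k using Nat.twoStepInduction with
      | zero => exact hE0
      | one => rw [hE1]; ring
      | more n ih1 ih2 => rw [hErec, ih1, ih2]; ring
    rw [hone m] at hzero
    exact one_ne_zero hzero
  -- u ≠ -1
  have hu1 : u ≠ -1 := by
    rintro rfl
    have hone : ∀ k, E k = (-1)^k := by
      intro k
      induction k using Nat.twoStepInduction with
      | zero => rw [hE0]; ring
      | one => rw [hE1]; ring
      | more n ih1 ih2 => rw [hErec, ih1, ih2]; ring
    rw [hone m] at hzero
    exact pow_ne_zero m (by norm_num : (-1:ℂ) ≠ 0) hzero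
  -- square root of the discriminant
  obtain ⟨δ, hδ⟩ : ∃ δ : ℂ, δ^2 = 8*u^2 + 8*u + 1 := by
    obtain ⟨z, hz⟩ := Complex.exists_root
      (f := Polynomial.X^2 - Polynomial.C (8*u^2 + 8*u + 1))
      (by rw [Polynomial.degree_X_pow_sub_C (by norm_num : 0 < 2)]; decide)
    refine ⟨z, ?_⟩
    have := hz
    simp [Polynomial.IsRoot, sub_eq_zero] at this
    exact this
  set α : ℂ := ((1+2*u)+δ)/2 with hα
  set β : ℂ := ((1+2*u)-δ)/2 with hβ
  have hsum : α + β = 1 + 2*u := by rw [hα, hβ]; ring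
  have hprod : α * β = -(u + u^2) := by
    rw [hα, hβ]
    linear_combination (-1/4 : ℂ) * hδ
  have hclosed : ∀ k, E k * (α - β) = α^(k+1) - β^(k+1) := by
    intro k
    induction k using Nat.twoStepInduction with
    | zero => rw [hE0]; ring
    | one => rw [hE1, ← hsum]; ring
    | more n ih1 ih2 =>
        calc E (n+2) * (α - β)
            = (1+2*u) * (E (n+1) * (α - β)) + (u+u^2) * (E n * (α - β)) := by
              rw [hErec]; ring
          _ = (α+β) * (α^(n+2) - β^(n+2)) + (-(α*β)) * (α^(n+1) - β^(n+1)) := by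
              rw [ih1, ih2, ← hsum]
              have hup : (u+u^2 : ℂ) = -(α*β) := by linear_combination hprod
              rw [hup]
          _ = α^(n+3) - β^(n+3) := by ring
  by_cases hab : α = β
  · -- discriminant zero: 8u² + 8u + 1 = 0
    have hδ0 : δ = 0 := by
      have : α - β = δ := by rw [hα, hβ]; ring
      rw [hab] at this
      simpa using this.symm
    have h8 : ((8:ℝ):ℂ) * u^2 + ((8:ℝ):ℂ) * u + 1 = 0 := by
      push_cast
      rw [hδ0] at hδ
      linear_combination -hδ
    exact quad_root_neg 8 (by norm_num) u h8
  · have hpow : α^(m+1) = β^(m+1) := by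
      have := hclosed m
      rw [hzero, zero_mul] at this
      linear_combination -this
    have hβ0 : β ≠ 0 := by
      rintro hb0
      rw [hb0, mul_zero] at hprod
      have : u * (u + 1) = 0 := by linear_combination hprod
      rcases mul_eq_zero.1 this with h' | h'
      · exact hu0 h'
      · exact hu1 (by linear_combination h')
    set ζ : ℂ := α / β with hζ
    have hζpow : ζ^(m+1) = 1 := by
      rw [hζ, div_pow, hpow, div_self (pow_ne_zero _ hβ0)]
    have habs : ‖ζ‖ = 1 := by
      have h1 : ‖ζ‖^(m+1) = 1 := by
        rw [← norm_pow, hζpow, norm_one]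
      rcases lt_trichotomy ‖ζ‖ 1 with hlt | heq | hgt
      · exfalso
        have := pow_lt_one₀ (norm_nonneg ζ) hlt (Nat.succ_ne_zero m)
        rw [h1] at this
        exact lt_irrefl 1 this
      · exact heq
      · exfalso
        have := one_lt_pow₀ hgt (Nat.succ_ne_zero m)
        rw [h1] at this
        exact lt_irrefl 1 this
    have hα0 : α ≠ 0 := by
      intro ha0
      rw [hζ, ha0, zero_div] at habs
      simp at habs
    have hinv : ζ⁻¹ = starRingEnd ℂ ζ := Complex.inv_eq_conj habs
    have hre : ζ + ζ⁻¹ = 2*(ζ.re:ℂ) := by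
      rw [hinv, Complex.add_conj]
      push_cast
      ring
    have hkey : (α+β)^2 = (ζ + ζ⁻¹ + 2) * (α*β) := by
      rw [hζ]
      field_simp
      ring
    have h2 : (1+2*u)^2 = (2*(ζ.re:ℂ) + 2) * (-(u+u^2)) := by
      rw [← hsum, ← hprod, ← hre]
      exact hkey
    have hrebd : -1 ≤ ζ.re := by
      have := Complex.abs_re_le_norm ζ
      rw [habs] at this
      have := abs_le.1 this
      linarith [this.1]
    have hfin : ((6 + 2*ζ.re : ℝ):ℂ) * u^2 + ((6 + 2*ζ.re : ℝ):ℂ) * u + 1 = 0 := by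
      push_cast
      linear_combination h2
    exact quad_root_neg (6 + 2*ζ.re) (by linarith) u hfin
section Glue

open Polynomial

variable {s : ℕ} {mv : Fin s → ℕ}

lemma iPoly_coeff_zero {V : Type*} [Fintype V] [DecidableEq V] (G : SimpleGraph V)
    [DecidableRel G.Adj] : (iPoly G).coeff 0 = 1 := by
  rw [iPoly_coeff]
  have : (iSets G).filter (fun A => A.card = 0) = {∅} := by
    ext A
    simp only [Finset.mem_filter, Finset.mem_singleton, Finset.card_eq_zero, mem_iSets]
    constructor
    · exact fun h => h.2
    · rintro rfl
      refine ⟨?_, rfl⟩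
      intro u hu
      simp at hu
  rw [this]
  simp

lemma natDegree_iPoly_sigma : (iPoly (sigmaGm s mv)).natDegree ≤ ∑ i, mv i := by
  rw [iPoly_sigmaGm]
  exact (Polynomial.natDegree_prod_le _ _).trans
    (Finset.sum_le_sum (fun i _ => natDegree_iPoly_Gm (mv i)))

lemma one_le_iPoly_sigma_coeff_top : 1 ≤ (iPoly (sigmaGm s mv)).coeff (∑ i, mv i) := by
  rw [iPoly_coeff]
  have hne : ((iSets (sigmaGm s mv)).filter (fun A => A.card = ∑ i, mv i)).Nonempty := by
    refine ⟨Finset.univ.sigma (fun i => Finset.univ.image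
      (fun k : Fin (mv i) => (Sum.inr (Sum.inl k) : GV (mv i)))), ?_⟩
    rw [Finset.mem_filter, mem_iSets]
    constructor
    · rintro ⟨i, x⟩ hu ⟨j, y⟩ hv hadj
      rw [Finset.mem_sigma] at hu hv
      by_cases hij : i = j
      · subst hij
        simp only [Finset.mem_image] at hu hv
        obtain ⟨k, -, rfl⟩ := hu.2
        obtain ⟨l, -, rfl⟩ := hv.2
        exact gm_adj_bb k l (sigmaGm_adj_mk.1 hadj)
      · exact sigmaGm_adj_ne hij hadj
    · rw [Finset.card_sigma]
      apply Finset.sum_congr rfl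
      intro i _
      rw [Finset.card_image_of_injective _ (fun a b hab => by
        simpa using hab), Finset.card_univ, Fintype.card_fin]
  have := Finset.card_pos.2 hne
  exact_mod_cast this

theorem main_aux (s : ℕ) (mv : Fin s → ℕ) (z : ℂ)
    (hz : Polynomial.eval z ((∑ k ∈ Finset.range ((∑ i, mv i) + 1),
        Polynomial.C ((∑ i ∈ Finset.range ((∑ i, mv i) + 1),
          Polynomial.C (nIndep (sigmaGm s mv) i : ℤ) *
            (Polynomial.X - 1) ^ ((∑ i, mv i) - i)).coeff ((∑ i, mv i) - k)) *
        Polynomial.X ^ k).map (Int.castRingHom ℂ)) = 0) :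
    ∃ r : ℝ, r < 0 ∧ z = (r : ℂ) := by
  classical
  set n := ∑ i, mv i with hn
  set F := iPoly (sigmaGm s mv) with hF
  set hp : Polynomial ℤ := ∑ i ∈ Finset.range (n + 1),
      Polynomial.C (nIndep (sigmaGm s mv) i : ℤ) * (Polynomial.X - 1) ^ (n - i) with hhp
  -- rewrite hz into a plain sum equation
  have hz' : ∑ k ∈ Finset.range (n+1), ((hp.coeff (n-k) : ℂ)) * z^k = 0 := by
    rw [← hz]
    rw [Polynomial.map_sum]
    rw [Polynomial.eval_finset_sum]
    apply Finset.sum_congr rfl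
    intro k _
    rw [Polynomial.map_mul, Polynomial.map_C, Polynomial.map_pow, Polynomial.map_X,
      Polynomial.eval_mul, Polynomial.eval_C, Polynomial.eval_pow, Polynomial.eval_X]
    norm_num
  -- degree bound for hp
  have hdeg : hp.natDegree ≤ n := by
    rw [hhp]
    apply Polynomial.natDegree_sum_le_of_forall_le
    intro i _
    apply (Polynomial.natDegree_C_mul_le _ _).trans
    apply (Polynomial.natDegree_pow_le).trans
    have : (Polynomial.X - 1 : Polynomial ℤ).natDegree = 1 := by
      rw [show (1 : Polynomial ℤ) = Polynomial.C 1 by simp, Polynomial.natDegree_X_sub_C]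
    rw [this]
    omega
  -- coefficient identities
  have hcoeff : ∀ i, ((nIndep (sigmaGm s mv) i : ℤ)) = F.coeff i := fun i =>
    nIndep_eq_coeff _ i
  have hFdeg : F.natDegree ≤ n := natDegree_iPoly_sigma
  -- z ≠ 1
  have hz1 : z ≠ 1 := by
    rintro rfl
    simp only [one_pow, mul_one] at hz'
    have hrefl : ∑ k ∈ Finset.range (n+1), ((hp.coeff (n-k) : ℂ))
        = ∑ j ∈ Finset.range (n+1), ((hp.coeff j : ℂ)) := by
      rw [← Finset.sum_range_reflect]
      apply Finset.sum_congr rfl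
      intro k hk
      congr 2
      rw [Finset.mem_range] at hk
      omega
    rw [hrefl] at hz'
    have heval : (hp.eval 1 : ℤ) = ∑ j ∈ Finset.range (n+1), hp.coeff j := by
      rw [Polynomial.eval_eq_sum_range' (Nat.lt_succ_of_le hdeg)]
      simp
    have heval2 : hp.eval 1 = (nIndep (sigmaGm s mv) n : ℤ) := by
      rw [hhp]
      rw [Polynomial.eval_finset_sum]
      rw [Finset.sum_eq_single n]
      · simp
      · intro i hi hne
        rw [Finset.mem_range] at hi
        simp only [Polynomial.eval_mul, Polynomial.eval_C, Polynomial.eval_pow,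
          Polynomial.eval_sub, Polynomial.eval_X, Polynomial.eval_one, sub_self]
        rw [zero_pow (by omega)]
        ring
      · intro hni
        simp at hni
    have hcast : ((∑ j ∈ Finset.range (n+1), hp.coeff j : ℤ) : ℂ) = 0 := by
      push_cast
      exact hz'
    rw [← heval, heval2] at hcast
    have : (nIndep (sigmaGm s mv) n : ℤ) = 0 := by exact_mod_cast hcast
    rw [hcoeff n] at this
    have hone := one_le_iPoly_sigma_coeff_top (s := s) (mv := mv)
    rw [← hn, ← hF] at hone
    omega
  -- z ≠ 0
  have hz0 : z ≠ 0 := by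
    rintro rfl
    rw [Finset.sum_eq_single 0] at hz'
    · simp only [Nat.sub_zero, pow_zero, mul_one] at hz'
      have hcn : hp.coeff n = 1 := by
        rw [hhp, Polynomial.finset_sum_coeff]
        rw [Finset.sum_eq_single 0]
        · simp only [Nat.sub_zero, Polynomial.coeff_C_mul]
          have hmonic : ((Polynomial.X - 1 : Polynomial ℤ) ^ n).coeff n = 1 := by
            have h1 : (Polynomial.X - 1 : Polynomial ℤ) = Polynomial.X - Polynomial.C 1 := by
              simp
            rw [h1]
            have hm : ((Polynomial.X - Polynomial.C (1:ℤ)) ^ n).Monic :=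
              (Polynomial.monic_X_sub_C 1).pow n
            have hdeg' : ((Polynomial.X - Polynomial.C (1:ℤ)) ^ n).natDegree = n := by
              rw [Polynomial.natDegree_pow, Polynomial.natDegree_X_sub_C, mul_one]
            have hcc := hm.coeff_natDegree
            rwa [hdeg'] at hcc
          rw [hmonic, mul_one]
          have h0 : (nIndep (sigmaGm s mv) 0 : ℤ) = 1 := by
            rw [hcoeff 0, hF, iPoly_coeff_zero]
          exact_mod_cast h0
        · intro i hi hne
          rw [Polynomial.coeff_C_mul]
          rw [Polynomial.coeff_eq_zero_of_natDegree_lt, mul_zero]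
          apply lt_of_le_of_lt (Polynomial.natDegree_pow_le)
          have : (Polynomial.X - 1 : Polynomial ℤ).natDegree = 1 := by
            rw [show (1 : Polynomial ℤ) = Polynomial.C 1 by simp, Polynomial.natDegree_X_sub_C]
          rw [this, mul_one]
          rw [Finset.mem_range] at hi
          omega
        · intro hni
          simp at hni
      rw [hcn] at hz'
      norm_num at hz'
    · intro k hk hkne
      rw [zero_pow hkne, mul_zero]
    · intro h0
      simp at h0
  -- main case
  set u : ℂ := z / (1 - z) with hu
  have h1z : (1 : ℂ) - z ≠ 0 := fun h => hz1 (by linear_combination -h)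
  set v : ℂ := (1 - z) / z with hv
  have hv0 : v ≠ 0 := div_ne_zero h1z hz0
  have hvu : v * u = 1 := by
    rw [hv, hu]
    field_simp
  -- from hz' : sum c_{n-k} z^k = 0 deduce sum over j of c_j z^{n-j} = 0
  have h3 : ∑ j ∈ Finset.range (n+1), ((hp.coeff j : ℂ)) * z^(n-j) = 0 := by
    rw [← hz']
    rw [← Finset.sum_range_reflect]
    apply Finset.sum_congr rfl
    intro k hk
    rw [Finset.mem_range] at hk
    congr 2 <;> omega
  -- sum_i f_i v^{n-i} = 0
  have h4 : ∑ i ∈ Finset.range (n+1), ((nIndep (sigmaGm s mv) i : ℂ)) * v^(n-i) = 0 := by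
    have hpe : Polynomial.eval (1/z) (hp.map (Int.castRingHom ℂ))
        = ∑ j ∈ Finset.range (n+1), ((hp.coeff j : ℂ)) * (1/z)^j := by
      rw [Polynomial.eval_eq_sum_range' (Nat.lt_succ_of_le
        (Polynomial.natDegree_map_le.trans hdeg))]
      apply Finset.sum_congr rfl
      intro j _
      rw [Polynomial.coeff_map]
      norm_num
    have hpe2 : Polynomial.eval (1/z) (hp.map (Int.castRingHom ℂ))
        = ∑ i ∈ Finset.range (n+1), ((nIndep (sigmaGm s mv) i : ℂ)) * ((1/z) - 1)^(n-i) := by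
      rw [hhp]
      rw [Polynomial.map_sum, Polynomial.eval_finset_sum]
      apply Finset.sum_congr rfl
      intro i _
      rw [Polynomial.map_mul, Polynomial.map_C, Polynomial.map_pow, Polynomial.map_sub,
        Polynomial.map_X, Polynomial.map_one, Polynomial.eval_mul, Polynomial.eval_C,
        Polynomial.eval_pow, Polynomial.eval_sub, Polynomial.eval_X, Polynomial.eval_one]
      norm_num
    have hzn : Polynomial.eval (1/z) (hp.map (Int.castRingHom ℂ)) = 0 := by
      have hmul : z^n * Polynomial.eval (1/z) (hp.map (Int.castRingHom ℂ)) = 0 := by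
        rw [hpe, Finset.mul_sum, ← h3]
        apply Finset.sum_congr rfl
        intro j hj
        rw [Finset.mem_range] at hj
        have hzj : z^n * (1/z)^j = z^(n-j) := by
          rw [one_div, inv_pow, ← pow_sub₀ z hz0 (by omega)]
        ring_nf
        ring_nf at hzj
        rw [← hzj]
        ring
      rcases mul_eq_zero.1 hmul with h' | h'
      · exact absurd h' (pow_ne_zero n hz0)
      · exact h'
    rw [hpe2] at hzn
    rw [← hzn]
    apply Finset.sum_congr rfl
    intro i _
    congr 2
    rw [hv]
    field_simp
  -- divide by v^n
  have h5 : ∑ i ∈ Finset.range (n+1), ((nIndep (sigmaGm s mv) i : ℂ)) * u^i = 0 := by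
    have hmul : v^n * (∑ i ∈ Finset.range (n+1), ((nIndep (sigmaGm s mv) i : ℂ)) * u^i) = 0 := by
      rw [Finset.mul_sum, ← h4]
      apply Finset.sum_congr rfl
      intro i hi
      rw [Finset.mem_range] at hi
      have hkey : v^(n-i) = v^n * u^i := by
        have h6 : v^(n-i) * (v^i * u^i) = v^n * u^i := by
          rw [← mul_assoc, ← pow_add]
          congr 2
          omega
        rw [← h6, ← mul_pow, hvu, one_pow, mul_one]
      rw [hkey]
      ring
    rcases mul_eq_zero.1 hmul with h' | h'
    · exact absurd h' (pow_ne_zero n hv0)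
    · exact h'
  -- recognize as evaluation of F
  have h7 : Polynomial.eval u (F.map (Int.castRingHom ℂ)) = 0 := by
    rw [Polynomial.eval_eq_sum_range' (Nat.lt_succ_of_le
      (Polynomial.natDegree_map_le.trans hFdeg))]
    rw [← h5]
    apply Finset.sum_congr rfl
    intro i _
    rw [Polynomial.coeff_map]
    congr 1
    rw [← hcoeff i]
    norm_num
  -- factor over the components
  rw [hF, iPoly_sigmaGm, Polynomial.map_prod, Polynomial.eval_prod] at h7
  obtain ⟨i0, -, hi0⟩ := Finset.prod_eq_zero_iff.1 h7
  rw [iPoly_Gm_eq_Rpoly] at hi0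
  obtain ⟨r', hr1, hr2, hur⟩ := Rpoly_root_neg (mv i0) u hi0
  -- recover z
  have h1r : (1 : ℝ) + r' > 0 := by linarith
  have h1rC : (1 : ℂ) + u ≠ 0 := by
    rw [hur]
    intro hcon
    have : (((1 + r' : ℝ)) : ℂ) = 0 := by push_cast; linear_combination hcon
    rw [Complex.ofReal_eq_zero] at this
    linarith
  have hzu : z * (1 + u) = u := by
    rw [hu]
    field_simp
    ring
  refine ⟨r' / (1 + r'), div_neg_of_neg_of_pos hr2 h1r, ?_⟩
  have hzeq : z = u / (1 + u) := by
    rw [eq_div_iff h1rC]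
    exact hzu
  rw [hzeq, hur]
  push_cast
  rfl

end Glue
/-- Let `G = G_{m₁} ⊔ ⋯ ⊔ G_{mₛ}` with all `mᵢ ≥ 1` and `n = m₁ + ⋯ + mₛ`. Then every
complex root of the `h`-polynomial `∑_{k=0}^{n} h_k t^k` of the independence complex of
`G` is a negative real number, where `∑_k h_k t^{n−k} = ∑_i f_{i−1}(Ind G)(t−1)^{n−i}`. -/
theorem disjUnion_Gm_hPoly_roots_neg_real (s : ℕ) (hs : 1 ≤ s) (mv : Fin s → ℕ)
    (hmv : ∀ i, 1 ≤ mv i) :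
    let n := ∑ i, mv i
    let hp : Polynomial ℤ := ∑ i ∈ Finset.range (n + 1),
      Polynomial.C (nIndep (sigmaGm s mv) i : ℤ) * (Polynomial.X - 1) ^ (n - i)
    let hAsc : Polynomial ℤ :=
      ∑ k ∈ Finset.range (n + 1), Polynomial.C (hp.coeff (n - k)) * Polynomial.X ^ k
    ∀ z : ℂ, Polynomial.eval z (hAsc.map (Int.castRingHom ℂ)) = 0 →
      ∃ r : ℝ, r < 0 ∧ z = (r : ℂ) := by
  intro n hp hAsc z hz
  exact main_aux s mv z hz
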